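/- In an undirected connected graph where all pairwise deltas satisfy the triangle inequality and Delta = Phi, the storage cost of a minimum spanning tree is at most the storage cost of a shortest-path tree, and the sum of recreation costs of a shortest-path tree is at most the sum of recreation costs of a minimum spanning tree; moreover if a single spanning tree is simultaneously an MST and an SPT, it is optimal for every one of the six optimization problems. -/

import Mathlib

/-- A spanning tree (arborescence) rooted at `v0`, given by a parent map. -/
structure ArbTree (V : Type) (v0 : V) where
  parent : V → V
  root_fix : parent v0 = v0
  reaches : ∀ v, ∃ n, parent^[n] v = v0

/-- The number of tree edges on the path from `v` up to the root. -/
noncomputable def ArbTree.depth {V : Type} [DecidableEq V] {v0 : V}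
    (T : ArbTree V v0) (v : V) : ℕ :=
  Nat.find (T.reaches v)

/-- The recreation cost of `v`: total weight of the tree path from `v0` to `v`. -/
noncomputable def recCost {V : Type} [DecidableEq V] {v0 : V}
    (T : ArbTree V v0) (w : V → V → ℝ) (v : V) : ℝ :=
  ∑ i ∈ Finset.range (T.depth v), w (T.parent^[i+1] v) (T.parent^[i] v)

/-- The storage cost of the tree: total weight of its edges. -/
noncomputable def treeCost {V : Type} [Fintype V] [DecidableEq V] {v0 : V}
    (T : ArbTree V v0) (w : V → V → ℝ) : ℝ :=
  ∑ v ∈ Finset.univ.filter (· ≠ v0), w (T.parent v) v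

/-- The tree is a spanning tree of the graph with adjacency `Adj`. -/
def IsSpanning {V : Type} {v0 : V} (Adj : V → V → Prop) (T : ArbTree V v0) : Prop :=
  ∀ v, v ≠ v0 → Adj (T.parent v) v

/-- `l` is a walk from `a` to `b` in the graph with adjacency `Adj`. -/
def IsWalk {V : Type} (Adj : V → V → Prop) (a b : V) (l : List V) : Prop :=
  l.Chain' Adj ∧ l.head? = some a ∧ l.getLast? = some b

/-- Total weight of a walk. -/
def walkCost {V : Type} (w : V → V → ℝ) : List V → ℝ
  | [] => 0
  | [_] => 0
  | a :: b :: rest => w a b + walkCost w (b :: rest)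

/-- Shortest-path distance from `a` to `b`. -/
noncomputable def graphDist {V : Type} (Adj : V → V → Prop) (w : V → V → ℝ)
    (a b : V) : ℝ :=
  sInf {c | ∃ l, IsWalk Adj a b l ∧ walkCost w l = c}

/-!
An SPT realises the graph distance from `v0` at every vertex, while the tree path of any
spanning tree is a walk in the graph, so its recreation costs dominate the distances. Hence an
SPT minimises every recreation cost, their sum and their maximum, and an MST minimises the
storage cost by definition; a tree that is both is optimal whatever the objective and constraint.
-/

namespace ArbTree

variable {V : Type} [DecidableEq V] {v0 : V} (T : ArbTree V v0)

theorem depth_root : T.depth v0 = 0 :=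
  Nat.eq_zero_of_le_zero (Nat.find_le (by simp))

theorem eq_root_of_depth_eq_zero {v : V} (h : T.depth v = 0) : v = v0 := by
  have hspec := Nat.find_spec (T.reaches v)
  rwa [← depth, h, Function.iterate_zero_apply] at hspec

theorem depth_eq_depth_parent_add_one {v : V} (hv : v ≠ v0) :
    T.depth v = T.depth (T.parent v) + 1 := by
  have hle : T.depth v ≤ T.depth (T.parent v) + 1 :=
    Nat.find_le (by rw [Function.iterate_succ_apply]; exact Nat.find_spec (T.reaches _))
  obtain ⟨k, hk⟩ := Nat.exists_eq_succ_of_ne_zero fun h ↦ hv (T.eq_root_of_depth_eq_zero h)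
  have hspec : T.parent^[k] (T.parent v) = v0 := by
    rw [← Function.iterate_succ_apply, ← hk]
    exact Nat.find_spec (T.reaches v)
  have hge : T.depth (T.parent v) ≤ k := Nat.find_le hspec
  omega

end ArbTree

section Walks

variable {V : Type} (w : V → V → ℝ)

theorem walkCost_nonneg (hw : ∀ a b, 0 ≤ w a b) : ∀ l : List V, 0 ≤ walkCost w l
  | [] | [_] => le_rfl
  | a :: b :: rest => add_nonneg (hw a b) (walkCost_nonneg hw (b :: rest))

theorem walkCost_append_pair (a b : V) :
    ∀ l : List V, walkCost w (l ++ [a, b]) = walkCost w (l ++ [a]) + w a b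
  | [] => by simp [walkCost]
  | [c] => by simp [walkCost]
  | c :: d :: rest => by
    simp only [List.cons_append, walkCost]
    rw [← List.cons_append, ← List.cons_append, walkCost_append_pair a b (d :: rest)]
    ring

end Walks

section Costs

variable {V : Type} [DecidableEq V] {v0 : V} (T : ArbTree V v0) (w : V → V → ℝ)

theorem recCost_root : recCost T w v0 = 0 := by
  simp [recCost, T.depth_root]

theorem recCost_eq_recCost_parent_add {v : V} (hv : v ≠ v0) :
    recCost T w v = recCost T w (T.parent v) + w (T.parent v) v := by
  rw [recCost, T.depth_eq_depth_parent_add_one hv, Finset.sum_range_succ']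
  simp [recCost, Function.iterate_succ_apply]

/-- The walk is written `l ++ [v]` so that the induction step can append the next vertex. -/
theorem IsSpanning.exists_walk_walkCost_eq_recCost {Adj : V → V → Prop}
    (hT : IsSpanning Adj T) (v : V) :
    ∃ l, IsWalk Adj v0 v (l ++ [v]) ∧ walkCost w (l ++ [v]) = recCost T w v := by
  induction hd : T.depth v generalizing v with
  | zero =>
    obtain rfl := T.eq_root_of_depth_eq_zero hd
    exact ⟨[], ⟨List.isChain_singleton _, rfl, rfl⟩, by simp [walkCost, recCost_root]⟩
  | succ n ih =>
    have hv : v ≠ v0 := by rintro rfl; simp [T.depth_root] at hd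
    obtain ⟨l, ⟨hchain, hhead, -⟩, hcost⟩ :=
      ih (T.parent v) (by have := T.depth_eq_depth_parent_add_one hv; omega)
    refine ⟨l ++ [T.parent v], ⟨?_, ?_, by simp⟩, ?_⟩
    · exact List.IsChain.append_overlap hchain (List.isChain_pair.mpr (hT v hv)) (by simp)
    · simpa [List.head?_append] using hhead
    · rw [List.append_assoc, List.singleton_append, walkCost_append_pair, hcost,
        recCost_eq_recCost_parent_add T w hv]

end Costs

section Distance

variable {V : Type} [DecidableEq V] {v0 : V} {Adj : V → V → Prop} {w : V → V → ℝ}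

theorem graphDist_le_recCost (hw : ∀ a b, 0 ≤ w a b) {T : ArbTree V v0}
    (hT : IsSpanning Adj T) (v : V) : graphDist Adj w v0 v ≤ recCost T w v := by
  obtain ⟨l, hwalk, hcost⟩ := hT.exists_walk_walkCost_eq_recCost T w v
  exact csInf_le ⟨0, fun _ ⟨l', _, hc⟩ ↦ hc ▸ walkCost_nonneg w hw l'⟩ ⟨_, hwalk, hcost⟩

theorem recCost_le_of_eq_graphDist (hw : ∀ a b, 0 ≤ w a b) {T T' : ArbTree V v0}
    (hTSpt : ∀ v, recCost T w v = graphDist Adj w v0 v) (hT' : IsSpanning Adj T') (v : V) :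
    recCost T w v ≤ recCost T' w v :=
  hTSpt v ▸ graphDist_le_recCost hw hT' v

end Distance

theorem stmt19_general {V : Type} [Fintype V] [DecidableEq V] [Nonempty V]
    (Adj : V → V → Prop)
    (w : V → V → ℝ) (hw : ∀ a b, 0 ≤ w a b)
    (v0 : V)
    (Tm : ArbTree V v0) (hTm : IsSpanning Adj Tm)
    (hTmMin : ∀ T' : ArbTree V v0, IsSpanning Adj T' → treeCost Tm w ≤ treeCost T' w)
    (Ts : ArbTree V v0) (hTs : IsSpanning Adj Ts)
    (hTsSpt : ∀ v, recCost Ts w v = graphDist Adj w v0 v)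
    (T : ArbTree V v0)
    (hTMst : ∀ T' : ArbTree V v0, IsSpanning Adj T' → treeCost T w ≤ treeCost T' w)
    (hTSpt : ∀ v, recCost T w v = graphDist Adj w v0 v) :
    -- MST storage ≤ SPT storage, and SPT sum recreation ≤ MST sum recreation
    (treeCost Tm w ≤ treeCost Ts w) ∧
    ((∑ v, recCost Ts w v) ≤ ∑ v, recCost Tm w v) ∧
    -- Problem 1: minimize storage
    (∀ T' : ArbTree V v0, IsSpanning Adj T' → treeCost T w ≤ treeCost T' w) ∧
    -- Problem 2: minimize each recreation cost (hence the max)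
    (∀ T' : ArbTree V v0, IsSpanning Adj T' →
      (∀ v, recCost T w v ≤ recCost T' w v) ∧
      Finset.univ.sup' Finset.univ_nonempty (recCost T w) ≤
        Finset.univ.sup' Finset.univ_nonempty (recCost T' w)) ∧
    -- Problem 3: minimize sum recreation subject to storage ≤ β
    (∀ β : ℝ, treeCost T w ≤ β → ∀ T' : ArbTree V v0, IsSpanning Adj T' →
      treeCost T' w ≤ β → (∑ v, recCost T w v) ≤ ∑ v, recCost T' w v) ∧
    -- Problem 4: minimize max recreation subject to storage ≤ β
    (∀ β : ℝ, treeCost T w ≤ β → ∀ T' : ArbTree V v0, IsSpanning Adj T' →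
      treeCost T' w ≤ β →
      Finset.univ.sup' Finset.univ_nonempty (recCost T w) ≤
        Finset.univ.sup' Finset.univ_nonempty (recCost T' w)) ∧
    -- Problem 5: minimize storage subject to sum recreation ≤ θ
    (∀ θ : ℝ, (∑ v, recCost T w v) ≤ θ → ∀ T' : ArbTree V v0, IsSpanning Adj T' →
      (∑ v, recCost T' w v) ≤ θ → treeCost T w ≤ treeCost T' w) ∧
    -- Problem 6: minimize storage subject to max recreation ≤ θ
    (∀ θ : ℝ, Finset.univ.sup' Finset.univ_nonempty (recCost T w) ≤ θ →
      ∀ T' : ArbTree V v0, IsSpanning Adj T' →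
      Finset.univ.sup' Finset.univ_nonempty (recCost T' w) ≤ θ →
      treeCost T w ≤ treeCost T' w) := by
  have hrec : ∀ T' : ArbTree V v0, IsSpanning Adj T' → ∀ v, recCost T w v ≤ recCost T' w v :=
    fun _ hT' ↦ recCost_le_of_eq_graphDist hw hTSpt hT'
  have hsum : ∀ T' : ArbTree V v0, IsSpanning Adj T' →
      ∑ v, recCost T w v ≤ ∑ v, recCost T' w v :=
    fun T' hT' ↦ Finset.sum_le_sum fun v _ ↦ hrec T' hT' v
  have hmax : ∀ T' : ArbTree V v0, IsSpanning Adj T' →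
      Finset.univ.sup' Finset.univ_nonempty (recCost T w) ≤
        Finset.univ.sup' Finset.univ_nonempty (recCost T' w) :=
    fun T' hT' ↦ Finset.sup'_mono_fun fun v _ ↦ hrec T' hT' v
  exact ⟨hTmMin Ts hTs,
    Finset.sum_le_sum fun v _ ↦ recCost_le_of_eq_graphDist hw hTsSpt hTm v,
    hTMst, fun T' hT' ↦ ⟨hrec T' hT', hmax T' hT'⟩,
    fun _ _ T' hT' _ ↦ hsum T' hT', fun _ _ T' hT' _ ↦ hmax T' hT',
    fun _ _ T' hT' _ ↦ hTMst T' hT', fun _ _ T' hT' _ ↦ hTMst T' hT'⟩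

/-- the storage cost of an MST is at most that of an SPT; the sum of
recreation costs of an SPT is at most that of an MST; and a spanning tree that is
simultaneously an MST and an SPT is optimal for all six optimization problems. -/
theorem stmt19 {V : Type} [Fintype V] [DecidableEq V] [Nonempty V]
    (Adj : V → V → Prop) (hsym : ∀ a b, Adj a b → Adj b a)
    (w : V → V → ℝ) (hwsym : ∀ a b, w a b = w b a) (hw : ∀ a b, 0 ≤ w a b)
    (v0 : V) (hconn : ∀ a b, ∃ l, IsWalk Adj a b l)
    (Tm : ArbTree V v0) (hTm : IsSpanning Adj Tm)
    (hTmMin : ∀ T' : ArbTree V v0, IsSpanning Adj T' → treeCost Tm w ≤ treeCost T' w)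
    (Ts : ArbTree V v0) (hTs : IsSpanning Adj Ts)
    (hTsSpt : ∀ v, recCost Ts w v = graphDist Adj w v0 v)
    (T : ArbTree V v0) (hT : IsSpanning Adj T)
    (hTMst : ∀ T' : ArbTree V v0, IsSpanning Adj T' → treeCost T w ≤ treeCost T' w)
    (hTSpt : ∀ v, recCost T w v = graphDist Adj w v0 v) :
    -- MST storage ≤ SPT storage, and SPT sum recreation ≤ MST sum recreation
    (treeCost Tm w ≤ treeCost Ts w) ∧
    ((∑ v, recCost Ts w v) ≤ ∑ v, recCost Tm w v) ∧
    -- Problem 1: minimize storage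
    (∀ T' : ArbTree V v0, IsSpanning Adj T' → treeCost T w ≤ treeCost T' w) ∧
    -- Problem 2: minimize each recreation cost (hence the max)
    (∀ T' : ArbTree V v0, IsSpanning Adj T' →
      (∀ v, recCost T w v ≤ recCost T' w v) ∧
      Finset.univ.sup' Finset.univ_nonempty (recCost T w) ≤
        Finset.univ.sup' Finset.univ_nonempty (recCost T' w)) ∧
    -- Problem 3: minimize sum recreation subject to storage ≤ β
    (∀ β : ℝ, treeCost T w ≤ β → ∀ T' : ArbTree V v0, IsSpanning Adj T' →
      treeCost T' w ≤ β → (∑ v, recCost T w v) ≤ ∑ v, recCost T' w v) ∧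
    -- Problem 4: minimize max recreation subject to storage ≤ β
    (∀ β : ℝ, treeCost T w ≤ β → ∀ T' : ArbTree V v0, IsSpanning Adj T' →
      treeCost T' w ≤ β →
      Finset.univ.sup' Finset.univ_nonempty (recCost T w) ≤
        Finset.univ.sup' Finset.univ_nonempty (recCost T' w)) ∧
    -- Problem 5: minimize storage subject to sum recreation ≤ θ
    (∀ θ : ℝ, (∑ v, recCost T w v) ≤ θ → ∀ T' : ArbTree V v0, IsSpanning Adj T' →
      (∑ v, recCost T' w v) ≤ θ → treeCost T w ≤ treeCost T' w) ∧
    -- Problem 6: minimize storage subject to max recreation ≤ θ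
    (∀ θ : ℝ, Finset.univ.sup' Finset.univ_nonempty (recCost T w) ≤ θ →
      ∀ T' : ArbTree V v0, IsSpanning Adj T' →
      Finset.univ.sup' Finset.univ_nonempty (recCost T' w) ≤ θ →
      treeCost T w ≤ treeCost T' w) :=
  stmt19_general Adj w hw v0 Tm hTm hTmMin Ts hTs hTsSpt T hTMst hTSpt
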